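/- arXiv:0707.2348 — 4 statements merged into one kernel-verified Lean document; each statement's English description precedes it below -/
import Mathlib

section
/- Let R be a commutative ring, M an R-module, and s ∈ M. Assume that the quotient module M/(R·s) has finite length and that M has no nonzero submodule of finite length. Then the annihilator of s in R equals the annihilator of M in R, i.e., Ann_R(s) = Ann_R(M). -/
/-!
If `a` kills a submodule `N`, multiplication by `a` on `M` factors through `M ⧸ N`, so its image
`a • M` is a quotient of a module of finite length. When `M` has no nonzero submodule of finite
length, this forces `a • M = 0`.
-/

namespace Submodule

variable {R M : Type*} [CommRing R] [AddCommGroup M] [Module R M]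

lemma isFiniteLength_range_lsmul {N : Submodule R M} {a : R} (ha : a ∈ N.annihilator)
    (hN : IsFiniteLength R (M ⧸ N)) :
    IsFiniteLength R (LinearMap.range (LinearMap.lsmul R M a)) := by
  have hker : N ≤ LinearMap.ker (LinearMap.lsmul R M a) := mem_annihilator.mp ha
  rw [← range_liftQ N _ hker]
  exact hN.of_surjective (N.liftQ _ hker).surjective_rangeRestrict

lemma annihilator_eq_of_isFiniteLength_quotient {N : Submodule R M}
    (hN : IsFiniteLength R (M ⧸ N))
    (hpure : ∀ P : Submodule R M, IsFiniteLength R P → P = ⊥) :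
    N.annihilator = Module.annihilator R M := by
  refine le_antisymm (fun a ha => ?_)
    (annihilator_top (R := R) (M := M) ▸ annihilator_mono le_top)
  have hzero : LinearMap.lsmul R M a = 0 :=
    LinearMap.range_eq_bot.mp (hpure _ (isFiniteLength_range_lsmul ha hN))
  exact Module.mem_annihilator.mpr (LinearMap.congr_fun hzero)

end Submodule

/-- **Module-theoretic form of Lemma 1.2** of Pandharipande–Thomas, "Curve counting via stable
pairs in the derived category".  Let `R` be a commutative ring, `M` an `R`-module, and `s ∈ M`.
Assume that the quotient module `M/(R·s)` has finite length and that `M` has no nonzero submodule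
of finite length.  Then the annihilator of `s` in `R` equals the annihilator of `M` in `R`. -/
theorem annihilator_eq_of_finiteLength_cokernel
    (R : Type) [CommRing R] (M : Type) [AddCommGroup M] [Module R M] (s : M)
    (hcoker : IsFiniteLength R (M ⧸ (R ∙ s)))
    (hpure : ∀ N : Submodule R M, IsFiniteLength R N → N = ⊥) :
    (R ∙ s).annihilator = Module.annihilator R M :=
  Submodule.annihilator_eq_of_isFiniteLength_quotient hcoker hpure
end

section
/- Fix r ≥ 1. For nonzero β ∈ ℤ^r let div(β) denote the largest positive integer d such that β/d ∈ ℤ^r. Suppose given, for every nonzero β ∈ ℤ^r, a formal Laurent series F_β ∈ ℚ((q)). Then there exists a unique family of rational numbers n_{g,β}, indexed by g ∈ ℤ and nonzero β ∈ ℤ^r, such that for each β one has n_{g,β} = 0 for all sufficiently large g, and for every nonzero β the coefficientwise convergent identity F_β(q) = Σ_{g∈ℤ} Σ_{d | div(β)} n_{g,β/d} · ((−1)^{g−1}/d) · ((−q)^d − 2 + (−q)^{−d})^{g−1} holds in ℚ((q)). In particular, for each fixed β, the solution satisfies n_{g,β} = 0 for all sufficiently large g. -/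
open HahnSeries

/-- `(−q)^d − 2 + (−q)^{−d}` as a formal Laurent series over `ℚ`. -/
noncomputable def PhiK (d : ℕ) : LaurentSeries ℚ :=
  HahnSeries.single (d : ℤ) ((-1 : ℚ) ^ d) - 2 + HahnSeries.single (-(d : ℤ)) ((-1 : ℚ) ^ d)

/-!
Write `Ψ = q + 2 + q⁻¹ = -Φ₁`. For `β ≠ 0` the `d = 1` summand of the identity is
`∑_g n_{g,β} Ψ^{g-1}`, while every other summand involves only `n_{·,β/d}` with `d ≥ 2`, and
`div(β/d) = div(β)/d` is smaller. Since `Ψ^k` has order `-k` and leading coefficient `1`, every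
Laurent series has a unique expansion `∑_k c_k Ψ^k` with `c_k = 0` for `k ≫ 0` (the system is
unitriangular), so well-founded induction on `div(β)` determines each column `n_{·,β}` uniquely.
-/

open Filter Function

namespace HahnSeries

section Field

variable {Γ K : Type*} [AddCommGroup Γ] [LinearOrder Γ] [IsOrderedAddMonoid Γ] [Field K]
  {x : HahnSeries Γ K}

omit [IsOrderedAddMonoid Γ] in
theorem order_eq_of_coeff_ne_zero {a : Γ} (ha : x.coeff a ≠ 0) (h : ∀ b < a, x.coeff b = 0) :
    x.order = a :=
  le_antisymm (order_le_of_coeff_ne_zero ha) <| not_lt.1 fun hlt =>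
    ne_zero_of_coeff_ne_zero ha (coeff_order_eq_zero.1 (h _ hlt))

theorem order_zpow (hx : x ≠ 0) (k : ℤ) : (x ^ k).order = k • x.order := by
  have order_inv : x⁻¹.order = -x.order := by
    have h := order_mul (inv_ne_zero hx) hx
    rw [inv_mul_cancel₀ hx, order_one] at h
    exact eq_neg_of_add_eq_zero_left h.symm
  induction k using Int.induction_on with
  | zero => simp
  | succ n ih => rw [zpow_add_one₀ hx, order_mul (zpow_ne_zero _ hx) hx, ih, add_smul, one_smul]
  | pred n ih =>
    rw [zpow_sub_one₀ hx, order_mul (zpow_ne_zero _ hx) (inv_ne_zero hx), ih, order_inv,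
      sub_smul, one_smul, sub_eq_add_neg]

theorem leadingCoeff_zpow (k : ℤ) : (x ^ k).leadingCoeff = x.leadingCoeff ^ k :=
  map_zpow₀ (⟨⟨leadingCoeff, leadingCoeff_zero⟩, leadingCoeff_one,
    fun _ _ => leadingCoeff_mul _ _⟩ : HahnSeries Γ K →*₀ K) x k

theorem coeff_zpow_of_lt (hx : x ≠ 0) {k : ℤ} {a : Γ} (ha : a < k • x.order) :
    (x ^ k).coeff a = 0 :=
  coeff_eq_zero_of_lt_order (order_zpow hx k ▸ ha)

theorem coeff_zpow_zsmul_order (hx : x ≠ 0) (k : ℤ) :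
    (x ^ k).coeff (k • x.order) = x.leadingCoeff ^ k := by
  rw [← leadingCoeff_zpow, leadingCoeff_eq, order_zpow hx]

end Field

end HahnSeries

section PhiK

theorem coeff_PhiK (d : ℕ) (m : ℤ) :
    (PhiK d).coeff m = (if m = d then (-1 : ℚ) ^ d else 0) - (if m = 0 then 2 else 0) +
      (if m = -(d : ℤ) then (-1 : ℚ) ^ d else 0) := by
  simp only [PhiK, coeff_add, coeff_sub, ← single_zero_ofNat, coeff_single]
  congr

variable {d : ℕ}

theorem coeff_PhiK_neg (hd : 0 < d) : (PhiK d).coeff (-(d : ℤ)) = (-1) ^ d := by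
  rw [coeff_PhiK]
  split_ifs <;> first | omega | simp

theorem PhiK_ne_zero (hd : 0 < d) : PhiK d ≠ 0 :=
  ne_zero_of_coeff_ne_zero (g := -(d : ℤ)) (by simp [coeff_PhiK_neg hd])

theorem order_PhiK (hd : 0 < d) : (PhiK d).order = -(d : ℤ) :=
  order_eq_of_coeff_ne_zero (by simp [coeff_PhiK_neg hd]) fun m hm => by
    rw [coeff_PhiK]
    split_ifs <;> first | omega | simp

theorem leadingCoeff_PhiK (hd : 0 < d) : (PhiK d).leadingCoeff = (-1) ^ d := by
  rw [leadingCoeff_eq, order_PhiK hd, coeff_PhiK_neg hd]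

theorem coeff_PhiK_zpow_of_lt (hd : 0 < d) {k m : ℤ} (h : m < -(k * d)) :
    ((PhiK d) ^ k).coeff m = 0 :=
  coeff_zpow_of_lt (PhiK_ne_zero hd) (by rwa [order_PhiK hd, smul_eq_mul, mul_neg])

/-- The coefficients of `(-1)^(g-1) Φ₁^(g-1) = (q + 2 + q⁻¹)^(g-1)`. -/
noncomputable def psiCoeff (g m : ℤ) : ℚ := (-1 : ℚ) ^ (g - 1) * ((PhiK 1) ^ (g - 1)).coeff m

theorem psiCoeff_of_lt (g m : ℤ) (h : m + g < 1) : psiCoeff g m = 0 := by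
  rw [psiCoeff, coeff_PhiK_zpow_of_lt one_pos (by push_cast; omega), mul_zero]

theorem psiCoeff_sub_self (g : ℤ) : psiCoeff g (1 - g) = 1 := by
  have h := coeff_zpow_zsmul_order (PhiK_ne_zero one_pos) (g - 1)
  rw [order_PhiK one_pos, leadingCoeff_PhiK one_pos, smul_eq_mul] at h
  rw [psiCoeff, show 1 - g = (g - 1) * -((1 : ℕ) : ℤ) by push_cast; ring, h, pow_one,
    ← mul_zpow, neg_one_mul, neg_neg, one_zpow]

end PhiK

theorem WellFounded.existsUnique_of_forall_existsUnique {α β : Type*} [Nonempty β]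
    {r : α → α → Prop} (hr : WellFounded r) (P : α → (α → β) → β → Prop)
    (hP : ∀ a f f', (∀ b, r b a → f b = f' b) → ∀ x, P a f x ↔ P a f' x)
    (h : ∀ a f, (∀ b, r b a → P b f (f b)) → ∃! x, P a f x) :
    ∃! f : α → β, ∀ a, P a f (f a) := by
  classical
  let extend (a : α) (g : ∀ b, r b a → β) (b : α) : β :=
    if hb : r b a then g b hb else Classical.arbitrary β
  let F : α → β := hr.fix fun a g => Classical.epsilon (P a (extend a g))
  have hF (a : α) : P a F (F a) := hr.induction (C := fun a => P a F (F a)) a fun a ih => by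
    have hext := hP a F (extend a fun b _ => F b) fun b hb => by simp only [extend, dif_pos hb]
    rw [show F a = _ from hr.fix_eq _ a, hext]
    exact Classical.epsilon_spec ((h a F ih).exists.imp fun x => (hext x).1)
  refine ⟨F, hF, fun f hf => funext fun a => ?_⟩
  refine hr.induction (C := fun a => f a = F a) a fun a ih => ?_
  exact (h a F fun b _ => hF b).unique ((hP a f F ih _).1 (hf a)) (hF a)

theorem Int.support_finite_of_eventually_zero {M : Type*} [Zero M] {f : ℤ → M}
    (hbot : ∀ᶠ k in atBot, f k = 0) (htop : ∀ᶠ k in atTop, f k = 0) : (support f).Finite :=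
  eventually_cofinite.1 (Int.cofinite_eq ▸ eventually_sup.2 ⟨hbot, htop⟩)

section UnitriangularExpansion

variable {R : Type*} [Ring R] {e : ℤ → ℤ → R} {a : ℤ}

theorem finite_support_mul_of_triangular (he : ∀ k m, m + k < a → e k m = 0) {c : ℤ → R}
    (hc : ∀ᶠ k in atTop, c k = 0) (m : ℤ) : (support fun k => c k * e k m).Finite :=
  Int.support_finite_of_eventually_zero
    ((eventually_lt_atBot (a - m)).mono fun k hk => by rw [he k m (by omega), mul_zero])
    (hc.mono fun k hk => by rw [hk, zero_mul])

theorem eq_zero_of_finsum_mul_eq_zero (he : ∀ k m, m + k < a → e k m = 0)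
    (he_diag : ∀ k, e k (a - k) = 1) {c : ℤ → R} (hc : ∀ᶠ k in atTop, c k = 0)
    (h : ∀ m, ∑ᶠ k, c k * e k m = 0) : c = 0 := by
  classical
  by_contra hne
  obtain ⟨K, hK⟩ := eventually_atTop.1 hc
  obtain ⟨k, hk, hmax⟩ := Int.exists_greatest_of_bdd (P := fun k => c k ≠ 0)
    ⟨K, fun j hj => (not_le.1 fun hKj => hj (hK j hKj)).le⟩ (Function.ne_iff.1 hne)
  refine hk ?_
  have hsum := h (a - k)
  rwa [finsum_eq_single _ k fun j hj => ?_, he_diag, mul_one] at hsum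
  rcases lt_or_gt_of_ne hj with hjk | hjk
  · rw [he j _ (by omega), mul_zero]
  · rw [not_not.1 (mt (hmax j) (not_le.2 hjk)), zero_mul]

theorem exists_eq_finsum_mul (he : ∀ k m, m + k < a → e k m = 0)
    (he_diag : ∀ k, e k (a - k) = 1) {γ : ℤ → R} (hγ : ∀ᶠ m in atBot, γ m = 0) :
    ∃ c : ℤ → R, (∀ᶠ k in atTop, c k = 0) ∧ ∀ m, γ m = ∑ᶠ k, c k * e k m := by
  obtain ⟨L, hL⟩ := eventually_atBot.1 hγ
  set K := a - L - 1
  -- `c k` is solved for downwards from `K`: the equation at `m = a - k` gives it, as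
  -- `e k (a - k) = 1` and only the `c j` with `k < j ≤ K` occur besides it
  have hwf : WellFounded fun j k : ℤ => k < j ∧ j ≤ K :=
    Subrelation.wf (fun {j k} h => show (K - j).toNat < (K - k).toNat by omega)
      (measure fun k : ℤ => (K - k).toNat).wf
  obtain ⟨c, hc, -⟩ := hwf.existsUnique_of_forall_existsUnique
    (fun k c x => x = if K < k then 0 else γ (a - k) - ∑ j ∈ Finset.Ioc k K, c j * e j (a - k))
    (fun k c c' hcc' x => by
      rw [Finset.sum_congr rfl fun j hj => by rw [hcc' j (Finset.mem_Ioc.1 hj)]])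
    (fun _ _ _ => existsUnique_eq)
  refine ⟨c, (eventually_gt_atTop K).mono fun k hk => by rw [hc, if_pos hk], fun m => ?_⟩
  by_cases hm : m ≤ L
  · rw [hL m hm, finsum_eq_zero_of_forall_eq_zero fun k => ?_]
    by_cases hk : K < k
    · rw [hc, if_pos hk, zero_mul]
    · rw [he k m (by omega), mul_zero]
  obtain ⟨k, rfl⟩ : ∃ k, m = a - k := ⟨a - m, by ring⟩
  have hsupp : (support fun j => c j * e j (a - k)) ⊆ Finset.Icc k K := fun j hj =>
    Finset.mem_Icc.2 ⟨not_lt.1 fun hjk => hj (by dsimp only; rw [he j _ (by omega), mul_zero]),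
      not_lt.1 fun hKj => hj (by dsimp only; rw [hc, if_pos hKj, zero_mul])⟩
  rw [finsum_eq_sum_of_support_subset _ hsupp, Finset.Icc_eq_cons_Ioc (by omega),
    Finset.sum_cons, hc k, if_neg (by omega), he_diag, mul_one, sub_add_cancel]

theorem existsUnique_eq_finsum_mul (he : ∀ k m, m + k < a → e k m = 0)
    (he_diag : ∀ k, e k (a - k) = 1) {γ : ℤ → R} (hγ : ∀ᶠ m in atBot, γ m = 0) :
    ∃! c : ℤ → R, (∀ᶠ k in atTop, c k = 0) ∧ ∀ m, γ m = ∑ᶠ k, c k * e k m := by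
  obtain ⟨c, hc, hγc⟩ := exists_eq_finsum_mul he he_diag hγ
  refine ⟨c, ⟨hc, hγc⟩, fun c' ⟨hc', hγc'⟩ => sub_eq_zero.1 ?_⟩
  refine eq_zero_of_finsum_mul_eq_zero he he_diag
    ((hc'.and hc).mono fun k hk => by rw [Pi.sub_apply, hk.1, hk.2, sub_zero]) fun m => ?_
  simp only [Pi.sub_apply, sub_mul]
  rw [finsum_sub_distrib (finite_support_mul_of_triangular he hc' m)
    (finite_support_mul_of_triangular he hc m), ← hγc', ← hγc, sub_self]

end UnitriangularExpansion

section Divisibility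

variable {ι : Type*} [Fintype ι] {β : ι → ℤ} {d : ℕ}

/-- The paper's `div(β)`. -/
def divisibility (β : ι → ℤ) : ℕ := (Finset.univ.gcd β).natAbs

theorem divisibility_ne_zero_iff : divisibility β ≠ 0 ↔ β ≠ 0 := by
  simp [divisibility, Finset.gcd_eq_zero_iff, funext_iff]

theorem dvd_divisibility_iff : d ∣ divisibility β ↔ ∀ i, (d : ℤ) ∣ β i := by
  simp [divisibility, ← Int.ofNat_dvd_left, Finset.dvd_gcd_iff]

theorem mem_divisors_divisibility (hβ : β ≠ 0) :
    d ∈ (divisibility β).divisors ↔ 0 < d ∧ ∀ i, (d : ℤ) ∣ β i := by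
  have hne := divisibility_ne_zero_iff.2 hβ
  rw [Nat.mem_divisors, dvd_divisibility_iff]
  exact ⟨fun h => ⟨Nat.pos_of_dvd_of_pos (dvd_divisibility_iff.2 h.1) (Nat.pos_of_ne_zero hne),
    h.1⟩, fun h => ⟨h.2, hne⟩⟩

theorem divisibility_eq_mul (hd : ∀ i, (d : ℤ) ∣ β i) :
    divisibility β = d * divisibility fun i => β i / d := by
  conv_lhs => rw [show β = fun i => (d : ℤ) * (β i / d) from funext fun i =>
    (Int.mul_ediv_cancel' (hd i)).symm]
  rw [divisibility, Finset.gcd_mul_left, Int.natAbs_mul, Int.normalize_coe_nat,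
    Int.natAbs_natCast, divisibility]

end Divisibility

section ProperQuotient

variable {ι : Type*} [Fintype ι] {a b β : ι → ℤ} {d : ℕ}

theorem div_ne_self (hβ : β ≠ 0) (hd : d ∈ (divisibility β).divisors) (hd1 : d ≠ 1) :
    (fun i => β i / d) ≠ β := fun h => by
  have hmul := divisibility_eq_mul ((mem_divisors_divisibility hβ).1 hd).2
  rw [h] at hmul
  exact hd1 (by simpa [divisibility_ne_zero_iff.2 hβ] using hmul.symm)

def IsProperQuotient (b a : ι → ℤ) : Prop :=
  a ≠ 0 ∧ ∃ d ∈ (divisibility a).divisors, d ≠ 1 ∧ b = fun i => a i / d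

theorem IsProperQuotient.divisibility_ne_zero (h : IsProperQuotient b a) :
    divisibility b ≠ 0 := by
  obtain ⟨ha, d, hd, -, rfl⟩ := h
  exact right_ne_zero_of_mul (divisibility_eq_mul ((mem_divisors_divisibility ha).1 hd).2 ▸
    divisibility_ne_zero_iff.2 ha)

theorem IsProperQuotient.divisibility_lt (h : IsProperQuotient b a) :
    divisibility b < divisibility a := by
  have hb := h.divisibility_ne_zero
  obtain ⟨ha, d, hd, hd1, rfl⟩ := h
  rw [divisibility_eq_mul ((mem_divisors_divisibility ha).1 hd).2]
  exact lt_mul_left (Nat.pos_of_ne_zero hb) (by have := Nat.pos_of_mem_divisors hd; omega)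

theorem wellFounded_isProperQuotient : WellFounded (IsProperQuotient (ι := ι)) :=
  Subrelation.wf (fun h => h.divisibility_lt) (measure divisibility).wf

end ProperQuotient

section BPS

variable {ι : Type*} {β : ι → ℤ} {N N' : (ι → ℤ) → ℤ → ℚ} {m : ℤ}

noncomputable def bpsTerm (N : (ι → ℤ) → ℤ → ℚ) (β : ι → ℤ) (m g : ℤ) (d : ℕ) : ℚ :=
  N (fun i => β i / (d : ℤ)) g * ((-1 : ℚ) ^ (g - 1) / (d : ℚ)) * ((PhiK d) ^ (g - 1)).coeff m

theorem bpsTerm_one (g : ℤ) : bpsTerm N β m g 1 = N β g * psiCoeff g m := by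
  simp [bpsTerm, psiCoeff, mul_assoc]

variable [Fintype ι]

/-- The right-hand side of the identity, for invariants indexed as `N β g = n_{g,β}`. -/
noncomputable def bpsRhs (N : (ι → ℤ) → ℤ → ℚ) (β : ι → ℤ) (m : ℤ) : ℚ :=
  ∑ᶠ g : ℤ, ∑ᶠ d : ℕ, if 0 < d ∧ ∀ i, (d : ℤ) ∣ β i then bpsTerm N β m g d else 0

theorem bpsRhs_eq_finsum_sum (hβ : β ≠ 0) :
    bpsRhs N β m = ∑ᶠ g : ℤ, ∑ d ∈ (divisibility β).divisors, bpsTerm N β m g d := by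
  refine finsum_congr fun g =>
    (finsum_eq_sum_of_support_subset (s := (divisibility β).divisors) _ fun d hd => ?_).trans ?_
  · by_contra hnot
    exact hd (if_neg (mt (mem_divisors_divisibility hβ).2 hnot))
  · exact Finset.sum_congr rfl fun d hd => if_pos ((mem_divisors_divisibility hβ).1 hd)

theorem bpsRhs_congr (hβ : β ≠ 0)
    (h : ∀ d ∈ (divisibility β).divisors, N (fun i => β i / d) = N' (fun i => β i / d)) :
    bpsRhs N β m = bpsRhs N' β m := by
  simp only [bpsRhs_eq_finsum_sum hβ]
  exact finsum_congr fun g => Finset.sum_congr rfl fun d hd => by rw [bpsTerm, bpsTerm, h d hd]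

theorem finite_support_sum_bpsTerm
    (hN : ∀ d ∈ (divisibility β).divisors, ∀ᶠ g in atTop, N (fun i => β i / d) g = 0) (m : ℤ) :
    (support fun g => ∑ d ∈ (divisibility β).divisors, bpsTerm N β m g d).Finite :=
  Int.support_finite_of_eventually_zero
    ((eventually_le_atBot (-|m|)).mono fun g hg => Finset.sum_eq_zero fun d hd => by
      have hd0 : (1 : ℤ) ≤ d := by exact_mod_cast Nat.pos_of_mem_divisors hd
      rw [bpsTerm, coeff_PhiK_zpow_of_lt (Nat.pos_of_mem_divisors hd), mul_zero]
      nlinarith [le_abs_self m, abs_nonneg m,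
        mul_nonneg (by linarith [abs_nonneg m] : 0 ≤ 1 - g) (by linarith : 0 ≤ (d : ℤ) - 1)])
    (((eventually_all_finset _).2 hN).mono fun g hg => Finset.sum_eq_zero fun d hd => by
      rw [bpsTerm, hg d hd, zero_mul, zero_mul])

theorem bpsRhs_eventually_zero (hβ : β ≠ 0)
    (hN : ∀ d ∈ (divisibility β).divisors, ∀ᶠ g in atTop, N (fun i => β i / d) g = 0) :
    ∀ᶠ m in atBot, bpsRhs N β m = 0 := by
  obtain ⟨G, hG⟩ := eventually_atTop.1 ((eventually_all_finset _).2 hN)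
  refine (eventually_lt_atBot (-(|G| * divisibility β))).mono fun m hm => ?_
  rw [bpsRhs_eq_finsum_sum hβ]
  refine finsum_eq_zero_of_forall_eq_zero fun g => Finset.sum_eq_zero fun d hd => ?_
  by_cases hg : G ≤ g
  · rw [bpsTerm, hG g hg d hd, zero_mul, zero_mul]
  have hd0 : (1 : ℤ) ≤ d := by exact_mod_cast Nat.pos_of_mem_divisors hd
  have hdB : (d : ℤ) ≤ divisibility β := by exact_mod_cast Nat.divisor_le hd
  rw [bpsTerm, coeff_PhiK_zpow_of_lt (Nat.pos_of_mem_divisors hd), mul_zero]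
  rcases le_or_gt g 1 with h1 | h1
  · nlinarith [abs_nonneg G]
  · nlinarith [le_abs_self G, mul_le_mul_of_nonpos_left hdB (by linarith : 1 - g ≤ 0)]


/-- The `d = 1` summand is the only one involving `N β`. -/
theorem bpsRhs_eq_add (hβ : β ≠ 0)
    (hN : ∀ d ∈ (divisibility β).divisors, ∀ᶠ g in atTop, N (fun i => β i / d) g = 0) (m : ℤ) :
    bpsRhs N β m = bpsRhs (update N β 0) β m + ∑ᶠ g, N β g * psiCoeff g m := by
  have h1 : 1 ∈ (divisibility β).divisors :=
    Nat.one_mem_divisors.2 (divisibility_ne_zero_iff.2 hβ)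
  have hN0 : ∀ d ∈ (divisibility β).divisors,
      ∀ᶠ g in atTop, update N β 0 (fun i => β i / d) g = 0 := fun d hd => by
    by_cases hd1 : d = 1
    · subst hd1; simp
    · rw [update_of_ne (div_ne_self hβ hd hd1)]; exact hN d hd
  rw [bpsRhs_eq_finsum_sum hβ, bpsRhs_eq_finsum_sum hβ, ← finsum_add_distrib
    (finite_support_sum_bpsTerm hN0 m)
    (finite_support_mul_of_triangular psiCoeff_of_lt (by simpa using hN 1 h1) m)]
  refine finsum_congr fun g => ?_
  rw [← Finset.add_sum_erase _ _ h1, ← Finset.add_sum_erase _ _ h1, bpsTerm_one, bpsTerm_one,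
    update_self, Pi.zero_apply, zero_mul, zero_add, add_comm]
  refine congrArg (· + _) (Finset.sum_congr rfl fun d hd => ?_)
  rw [bpsTerm, bpsTerm, update_of_ne
    (div_ne_self hβ (Finset.mem_of_mem_erase hd) (Finset.ne_of_mem_erase hd))]

theorem existsUnique_bps_column (A : LaurentSeries ℚ) (hβ : β ≠ 0)
    (hN : ∀ d ∈ (divisibility β).divisors, d ≠ 1 →
      ∀ᶠ g in atTop, N (fun i => β i / d) g = 0) :
    ∃! x : ℤ → ℚ, (∀ᶠ g in atTop, x g = 0) ∧ ∀ m, A.coeff m = bpsRhs (update N β x) β m := by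
  have hvan (x : ℤ → ℚ) (hx : ∀ᶠ g in atTop, x g = 0) : ∀ d ∈ (divisibility β).divisors,
      ∀ᶠ g in atTop, update N β x (fun i => β i / d) g = 0 := fun d hd => by
    by_cases hd1 : d = 1
    · subst hd1; simpa using hx
    · rw [update_of_ne (div_ne_self hβ hd hd1)]; exact hN d hd hd1
  have hsplit (x : ℤ → ℚ) (hx : ∀ᶠ g in atTop, x g = 0) (m : ℤ) :
      bpsRhs (update N β x) β m = bpsRhs (update N β 0) β m + ∑ᶠ g, x g * psiCoeff g m := by
    rw [bpsRhs_eq_add hβ (hvan x hx), update_idem, update_self]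
  have hγ : ∀ᶠ m in atBot, A.coeff m - bpsRhs (update N β 0) β m = 0 :=
    ((eventually_lt_atBot A.order).and
      (bpsRhs_eventually_zero hβ (hvan 0 (Eventually.of_forall fun _ => rfl)))).mono
      fun m hm => by rw [coeff_eq_zero_of_lt_order hm.1, hm.2, sub_zero]
  refine (existsUnique_congr fun x => and_congr_right fun hx => forall_congr' fun m => ?_).1
    (existsUnique_eq_finsum_mul psiCoeff_of_lt psiCoeff_sub_self hγ)
  rw [hsplit x hx m, sub_eq_iff_eq_add']

theorem existsUnique_bps_family (F : (ι → ℤ) → LaurentSeries ℚ) :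
    ∃! N : (ι → ℤ) → ℤ → ℚ, N 0 = 0 ∧ (∀ β, β ≠ 0 → ∀ᶠ g in atTop, N β g = 0) ∧
      ∀ β, β ≠ 0 → ∀ m, (F β).coeff m = bpsRhs N β m := by
  let P (β : ι → ℤ) (N : (ι → ℤ) → ℤ → ℚ) (x : ℤ → ℚ) : Prop := (β = 0 → x = 0) ∧
    (β ≠ 0 → (∀ᶠ g in atTop, x g = 0) ∧ ∀ m, (F β).coeff m = bpsRhs (update N β x) β m)
  have hlocal (β : ι → ℤ) (N N' : (ι → ℤ) → ℤ → ℚ)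
      (hNN' : ∀ b, IsProperQuotient b β → N b = N' b) (x : ℤ → ℚ) : P β N x ↔ P β N' x := by
    by_cases hβ : β = 0
    · simp [P, hβ]
    have hrhs (m : ℤ) : bpsRhs (update N β x) β m = bpsRhs (update N' β x) β m :=
      bpsRhs_congr hβ fun d hd => by
        by_cases hd1 : d = 1
        · subst hd1; simp
        · rw [update_of_ne (div_ne_self hβ hd hd1), update_of_ne (div_ne_self hβ hd hd1),
            hNN' _ ⟨hβ, d, hd, hd1, rfl⟩]
    simp only [P, hrhs]
  have hsolve (β : ι → ℤ) (N : (ι → ℤ) → ℤ → ℚ)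
      (hN : ∀ b, IsProperQuotient b β → P b N (N b)) : ∃! x, P β N x := by
    by_cases hβ : β = 0
    · simp [P, hβ]
    have hcol := existsUnique_bps_column (F β) hβ (N := N) fun d hd hd1 =>
      have hq : IsProperQuotient _ β := ⟨hβ, d, hd, hd1, rfl⟩
      ((hN _ hq).2 (divisibility_ne_zero_iff.1 hq.divisibility_ne_zero)).1
    simpa [P, hβ] using hcol
  refine (existsUnique_congr fun N => ?_).1
    (wellFounded_isProperQuotient.existsUnique_of_forall_existsUnique P hlocal hsolve)
  simp only [P, update_eq_self]
  exact ⟨fun h => ⟨(h 0).1 rfl, fun β hβ => ((h β).2 hβ).1, fun β hβ => ((h β).2 hβ).2⟩,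
    fun ⟨h0, hev, heq⟩ β => ⟨fun hβ => hβ ▸ h0, fun hβ => ⟨hev β hβ, heq β hβ⟩⟩⟩

end BPS

theorem bps_invariants_exist_unique_general (r : ℕ)
    (F : (Fin r → ℤ) → LaurentSeries ℚ) :
    ∃! n : ℤ → (Fin r → ℤ) → ℚ,
      (∀ g : ℤ, n g 0 = 0) ∧
      (∀ β : Fin r → ℤ, β ≠ 0 → ∃ G : ℤ, ∀ g : ℤ, G ≤ g → n g β = 0) ∧
      (∀ β : Fin r → ℤ, β ≠ 0 → ∀ m : ℤ,
        (F β).coeff m =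
          ∑ᶠ g : ℤ, ∑ᶠ d : ℕ,
            if 0 < d ∧ ∀ i : Fin r, (d : ℤ) ∣ β i then
              n g (fun i => β i / (d : ℤ)) * ((-1 : ℚ) ^ (g - 1) / (d : ℚ)) *
                ((PhiK d) ^ (g - 1)).coeff m
            else 0) := by
  refine ((Equiv.piComm fun (_ : ℤ) (_ : Fin r → ℤ) => ℚ).existsUnique_congr fun n => ?_).2
    (existsUnique_bps_family F)
  -- `congr!` identifies two different `Decidable (∀ i : Fin r, _)` instances
  exact and_congr funext_iff.symm
    (and_congr (forall₂_congr fun _ _ => eventually_atTop.symm) (by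
      simp only [bpsRhs, bpsTerm]; congr!))

/-- **Lemma 3.4** of Pandharipande–Thomas, "Curve counting via stable pairs in the derived
category", together with the subsequent vanishing lemma.  Fix `r ≥ 1`.  Given, for every nonzero
`β ∈ ℤ^r`, a formal Laurent series `F_β ∈ ℚ((q))`, there is a unique family of rational numbers
`n_{g,β}` (`g ∈ ℤ`, `β ∈ ℤ^r` nonzero, normalized by `n_{g,0} = 0`) such that for each `β ≠ 0` one
has `n_{g,β} = 0` for all sufficiently large `g`, and
`F_β(q) = Σ_{g ∈ ℤ} Σ_{d | div(β)} n_{g,β/d} · ((−1)^{g−1}/d) · ((−q)^d − 2 + (−q)^{−d})^{g−1}`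
coefficientwise in `ℚ((q))`.  (Here `d | div(β)` is expressed by the equivalent condition that
`d ≥ 1` divides every component of `β`.) -/
theorem bps_invariants_exist_unique (r : ℕ) (hr : 1 ≤ r)
    (F : (Fin r → ℤ) → LaurentSeries ℚ) :
    ∃! n : ℤ → (Fin r → ℤ) → ℚ,
      (∀ g : ℤ, n g 0 = 0) ∧
      (∀ β : Fin r → ℤ, β ≠ 0 → ∃ G : ℤ, ∀ g : ℤ, G ≤ g → n g β = 0) ∧
      (∀ β : Fin r → ℤ, β ≠ 0 → ∀ m : ℤ,
        (F β).coeff m =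
          ∑ᶠ g : ℤ, ∑ᶠ d : ℕ,
            if 0 < d ∧ ∀ i : Fin r, (d : ℤ) ∣ β i then
              n g (fun i => β i / (d : ℤ)) * ((-1 : ℚ) ^ (g - 1) / (d : ℚ)) *
                ((PhiK d) ^ (g - 1)).coeff m
            else 0) :=
  bps_invariants_exist_unique_general r F
end

section
/- In the formal power series ring ℤ[[q]], define S = Σ_{n≥0} a_n q^n with a_0 = 1, a_1 = −2, and a_n = (−1)^n·(n(n−1)/2 + 3) for n ≥ 2; that is, S = 1 + 2(−q) + Σ_{n≥2} (binom(n,2) + 3)·(−q)^n. Then S · (1−q)·(1+q)³ = 1 − q⁵; equivalently, S is the power series expansion of (1−q⁵)/((1−q)(1+q)³). -/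
open PowerSeries

/-- The stable pairs vertex series `(−q)²·W^P_{(1),(1),(1)}(q)`:
`S = 1 + 2(−q) + Σ_{n ≥ 2} (binom(n,2) + 3)·(−q)^n ∈ ℤ[[q]]`, i.e. the coefficients are
`a_0 = 1`, `a_1 = −2`, and `a_n = (−1)^n·(n(n−1)/2 + 3)` for `n ≥ 2`. -/
noncomputable def vertexSeries : PowerSeries ℤ :=
  PowerSeries.mk fun n =>
    if n = 0 then 1
    else if n = 1 then -2
    else (-1 : ℤ) ^ n * (n.choose 2 + 3)

/-- **The 3-leg vertex example** of Pandharipande–Thomas, "Curve counting via stable pairs in the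
derived category", Section 5.4:
`S · (1−q)·(1+q)³ = 1 − q⁵`, i.e. `S` is the power series expansion of
`(1−q⁵)/((1−q)(1+q)³)`. -/
theorem vertex_series_rational :
    vertexSeries * ((1 - PowerSeries.X) * (1 + PowerSeries.X) ^ 3) =
      1 - PowerSeries.X ^ 5 := by
  have h : vertexSeries * ((1 - PowerSeries.X) * (1 + PowerSeries.X) ^ 3)
      = vertexSeries + vertexSeries * X ^ 1 + vertexSeries * X ^ 1
        - vertexSeries * X ^ 3 - vertexSeries * X ^ 3 - vertexSeries * X ^ 4 := by ring
  rw [h]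
  ext n
  simp only [map_sub, map_add, map_mul, PowerSeries.coeff_mul_X_pow',
    PowerSeries.coeff_one, coeff_X_pow, vertexSeries, coeff_mk, map_ofNat]
  rcases n with _ | _ | _ | _ | _ | _ | n
  · norm_num
  · norm_num
  · norm_num [Nat.choose]
  · norm_num [Nat.choose]
  · norm_num [Nat.choose]
  · norm_num [Nat.choose]
  · have h1 : n + 6 - 1 = n + 5 := rfl
    have h3 : n + 6 - 3 = n + 3 := rfl
    have h4 : n + 6 - 4 = n + 2 := rfl
    norm_num [h1, h3, h4, Nat.choose_succ_succ, Nat.choose_one_right,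
      pow_succ]
    push_cast
    ring
end

section
/- For i = 1, 2, 3 let μ^i ⊆ ℕ² be a finite downward-closed set (a Young diagram). Define C_μ ⊆ ℕ³ by: (x₁,x₂,x₃) ∈ C_μ if and only if (x₂,x₃) ∈ μ¹ or (x₁,x₃) ∈ μ² or (x₁,x₂) ∈ μ³. Say a downward-closed set π ⊆ ℕ³ has outgoing partitions (μ¹,μ²,μ³) if ∩_{a≥0} {(y,z) : (a,y,z) ∈ π} = μ¹, ∩_{a≥0} {(x,z) : (x,a,z) ∈ π} = μ², and ∩_{a≥0} {(x,y) : (x,y,a) ∈ π} = μ³. Then: (i) C_μ is downward closed and has outgoing partitions (μ¹,μ²,μ³); and (ii) every downward-closed set π ⊆ ℕ³ with outgoing partitions (μ¹,μ²,μ³) satisfies C_μ ⊆ π, and the difference π \ C_μ is finite. -/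
/-!
`C_μ` has the right outgoing partitions because the μⁱ are bounded, so far enough out along
an axis only the leg of that axis survives. If `π` has outgoing partitions `μ`, then a point
`p ∉ C_μ` has, in each coordinate direction, a point of the form `p + a eᵢ` outside `π`;
as `π` is downward closed, `π` meets the cone above `p` only inside a box. By Dickson's lemma an
infinite `π \ C_μ` would contain a point whose cone holds infinitely many points of `π \ C_μ`.
-/

/-- A subset of `ℕ²` is downward closed (a Young diagram, if finite) if it is closed under
componentwise decrease. -/
def DownwardClosed2 (S : Set (ℕ × ℕ)) : Prop :=
  ∀ p ∈ S, ∀ q : ℕ × ℕ, q.1 ≤ p.1 → q.2 ≤ p.2 → q ∈ S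

/-- A subset of `ℕ³` is downward closed if it is closed under componentwise decrease. -/
def DownwardClosed3 (S : Set (ℕ × ℕ × ℕ)) : Prop :=
  ∀ p ∈ S, ∀ q : ℕ × ℕ × ℕ, q.1 ≤ p.1 → q.2.1 ≤ p.2.1 → q.2.2 ≤ p.2.2 → q ∈ S

/-- The minimal configuration `C_μ ⊆ ℕ³` with outgoing partitions `(μ¹, μ², μ³)`:
`(x₁,x₂,x₃) ∈ C_μ` iff `(x₂,x₃) ∈ μ¹` or `(x₁,x₃) ∈ μ²` or `(x₁,x₂) ∈ μ³`. -/
def Cmu (μ1 μ2 μ3 : Set (ℕ × ℕ)) : Set (ℕ × ℕ × ℕ) :=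
  {p | (p.2.1, p.2.2) ∈ μ1 ∨ (p.1, p.2.2) ∈ μ2 ∨ (p.1, p.2.1) ∈ μ3}

/-- `π ⊆ ℕ³` has outgoing partitions `(μ¹, μ², μ³)`:
the limits of the slices in the three coordinate directions are `μ¹`, `μ²`, `μ³`. -/
def HasOutgoing (π : Set (ℕ × ℕ × ℕ)) (μ1 μ2 μ3 : Set (ℕ × ℕ)) : Prop :=
  (⋂ a : ℕ, {p : ℕ × ℕ | (a, p.1, p.2) ∈ π}) = μ1 ∧
  (⋂ a : ℕ, {p : ℕ × ℕ | (p.1, a, p.2) ∈ π}) = μ2 ∧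
  (⋂ a : ℕ, {p : ℕ × ℕ | (p.1, p.2, a) ∈ π}) = μ3

open Set

theorem Set.Infinite.exists_mem_infinite_inter_Ici {α : Type*} [Preorder α]
    [WellQuasiOrderedLE α] {S : Set α} (hS : S.Infinite) : ∃ p ∈ S, (S ∩ Ici p).Infinite := by
  let f := Set.Infinite.natEmbedding S hS
  obtain ⟨g, hg⟩ := (isPWO_of_wellQuasiOrderedLE S).exists_monotone_subseq
    (f := fun n => (f n : α)) fun n => (f n).2
  have hinj : Function.Injective fun n => (f (g n) : α) :=
    fun m n h => g.injective (f.injective (Subtype.ext h))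
  refine ⟨f (g 0), (f (g 0)).2, (infinite_range_of_injective hinj).mono ?_⟩
  rintro _ ⟨n, rfl⟩
  exact ⟨(f (g n)).2, hg (Nat.zero_le n)⟩

theorem exists_forall_notMem_of_finite {μ : Set (ℕ × ℕ)} (h : μ.Finite) :
    ∃ N, ∀ b, (N, b) ∉ μ ∧ (b, N) ∉ μ := by
  obtain ⟨B, hB⟩ := h.bddAbove
  refine ⟨B.1 + B.2 + 1, fun b => ⟨fun hm => ?_, fun hm => ?_⟩⟩ <;>
  · have := hB hm
    simp only [Prod.le_def] at this
    omega

section Cmu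

variable {μ1 μ2 μ3 : Set (ℕ × ℕ)}

theorem downwardClosed3_Cmu (h1 : DownwardClosed2 μ1) (h2 : DownwardClosed2 μ2)
    (h3 : DownwardClosed2 μ3) : DownwardClosed3 (Cmu μ1 μ2 μ3) := by
  rintro p (hp | hp | hp) q hq1 hq2 hq3
  · exact Or.inl (h1 _ hp (q.2.1, q.2.2) hq2 hq3)
  · exact Or.inr (Or.inl (h2 _ hp (q.1, q.2.2) hq1 hq3))
  · exact Or.inr (Or.inr (h3 _ hp (q.1, q.2.1) hq1 hq2))

theorem hasOutgoing_Cmu (h1 : μ1.Finite) (h2 : μ2.Finite) (h3 : μ3.Finite) :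
    HasOutgoing (Cmu μ1 μ2 μ3) μ1 μ2 μ3 := by
  obtain ⟨N, hN⟩ := exists_forall_notMem_of_finite (h1.union (h2.union h3))
  simp only [mem_union, not_or] at hN
  refine ⟨?_, ?_, ?_⟩ <;> ext q <;> simp only [Cmu, mem_iInter, mem_ofPred_eq]
  · exact ⟨fun h => by simpa [hN] using h N, fun h _ => Or.inl h⟩
  · exact ⟨fun h => by simpa [hN] using h N, fun h _ => Or.inr (Or.inl h)⟩
  · exact ⟨fun h => by simpa [hN] using h N, fun h _ => Or.inr (Or.inr h)⟩

variable {π : Set (ℕ × ℕ × ℕ)}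

theorem Cmu_subset_of_hasOutgoing (hout : HasOutgoing π μ1 μ2 μ3) : Cmu μ1 μ2 μ3 ⊆ π := by
  obtain ⟨o1, o2, o3⟩ := hout
  rintro p (hp | hp | hp)
  · exact mem_iInter.1 (o1 ▸ hp) p.1
  · exact mem_iInter.1 (o2 ▸ hp) p.2.1
  · exact mem_iInter.1 (o3 ▸ hp) p.2.2

theorem finite_inter_Ici_of_notMem (hπ : DownwardClosed3 π) {p : ℕ × ℕ × ℕ} {a1 a2 a3 : ℕ}
    (h1 : (a1, p.2.1, p.2.2) ∉ π) (h2 : (p.1, a2, p.2.2) ∉ π) (h3 : (p.1, p.2.1, a3) ∉ π) :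
    (π ∩ Ici p).Finite := by
  refine (finite_Iic (a1, a2, a3)).subset fun s ⟨hs, hps⟩ => ⟨?_, ?_, ?_⟩
  · exact not_lt.1 fun h => h1 (hπ s hs _ h.le hps.2.1 hps.2.2)
  · exact not_lt.1 fun h => h2 (hπ s hs _ hps.1 h.le hps.2.2)
  · exact not_lt.1 fun h => h3 (hπ s hs _ hps.1 hps.2.1 h.le)

theorem finite_inter_Ici_of_notMem_Cmu (hπ : DownwardClosed3 π)
    (hout : HasOutgoing π μ1 μ2 μ3) {p : ℕ × ℕ × ℕ} (hp : p ∉ Cmu μ1 μ2 μ3) :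
    (π ∩ Ici p).Finite := by
  obtain ⟨o1, o2, o3⟩ := hout
  simp only [Cmu, mem_ofPred_eq, ← o1, ← o2, ← o3, mem_iInter, not_or, not_forall] at hp
  obtain ⟨⟨a1, h1⟩, ⟨a2, h2⟩, ⟨a3, h3⟩⟩ := hp
  exact finite_inter_Ici_of_notMem hπ h1 h2 h3

theorem finite_diff_Cmu (hπ : DownwardClosed3 π) (hout : HasOutgoing π μ1 μ2 μ3) :
    (π \ Cmu μ1 μ2 μ3).Finite := by
  by_contra hinf
  obtain ⟨p, hp, hcone⟩ := Set.Infinite.exists_mem_infinite_inter_Ici hinf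
  exact hcone ((finite_inter_Ici_of_notMem_Cmu hπ hout hp.2).subset
    (inter_subset_inter_left _ sdiff_subset))

end Cmu

/-- **Combinatorial content of Section 5** of Pandharipande–Thomas, "Curve counting via stable
pairs in the derived category".  Given three Young diagrams `μ¹, μ², μ³ ⊆ ℕ²` (finite and
downward closed), the set `C_μ` is downward closed with outgoing partitions `(μ¹, μ², μ³)`, and
every downward-closed `π ⊆ ℕ³` with outgoing partitions `(μ¹, μ², μ³)` contains `C_μ` with finite
difference `π \ C_μ`. -/
theorem minimal_Tfixed_subscheme (μ1 μ2 μ3 : Set (ℕ × ℕ))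
    (h1fin : μ1.Finite) (h2fin : μ2.Finite) (h3fin : μ3.Finite)
    (h1dc : DownwardClosed2 μ1) (h2dc : DownwardClosed2 μ2) (h3dc : DownwardClosed2 μ3) :
    (DownwardClosed3 (Cmu μ1 μ2 μ3) ∧ HasOutgoing (Cmu μ1 μ2 μ3) μ1 μ2 μ3) ∧
    (∀ π : Set (ℕ × ℕ × ℕ), DownwardClosed3 π → HasOutgoing π μ1 μ2 μ3 →
      Cmu μ1 μ2 μ3 ⊆ π ∧ (π \ Cmu μ1 μ2 μ3).Finite) :=
  ⟨⟨downwardClosed3_Cmu h1dc h2dc h3dc, hasOutgoing_Cmu h1fin h2fin h3fin⟩,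
    fun _ hπ hout => ⟨Cmu_subset_of_hasOutgoing hout, finite_diff_Cmu hπ hout⟩⟩
end
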